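/- Fix T₀ > 0 and R'' ∈ ℝ with T₀ + R'' > 0, τ > 0, and δ ∈ (0,1/2); let f = f_δ. Then for every three times continuously differentiable compactly supported real-valued ψ on Ω_{T₀,R''}: ⟨[P₁,P₂]ψ, ψ⟩ = ∫_{Ω_{T₀,R''}} τ·B(ψ)·t² dx dt + 2τ⟨ψ, (∂^ν □f)∂_ν ψ⟩ − 8τ(δ+1)⟨t^{−δ−3}ψ, ∂_tψ⟩, where [P₁,P₂]ψ := P₁(P₂ψ) − P₂(P₁ψ) and B(ψ) := 4(∂^β∂^ν f)(∂_βψ)(∂_νψ) + 4τ²ψ²(∂_α f)(∂_β f)(∂^α∂^β f). -/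

import Mathlib

/-!
On `{t > 0, x ≠ 0}`, where `f = f_δ` is smooth, the terms of `[P₁,P₂]ψ` with three derivatives
on `ψ` cancel, as do those in which `∂^α f ∂_α f` is not differentiated, leaving
`-2τ ∂^ν□f ∂_νψ - 4τ ∂^β∂^ν f ∂_β∂_νψ + 4τ³ ψ ∂_α f ∂_β f ∂^α∂^β f`.
After multiplication by `ψ t²`, the middle term is the divergence of
`J^β = -4τ t² ψ ∂^β∂^ν f ∂_νψ` up to the terms where the derivative falls on `∂^β∂^ν f`
(giving `∂^ν□f`), on `ψ` (giving the first half of `B`) or on `t²`; the last only sees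
`∂_t² f = -(δ+1) t^{-δ-2}`, because `∂_t ∂_i f = 0`. As `ψ` has compact support in `Ω`, the
divergence integrates to zero.
-/

noncomputable section
open MeasureTheory Real Set Filter Topology

namespace UCP

/-- Spacetime `ℝ^{1+3}`: a point is `(t, x)` with `x ∈ ℝ³`. -/
abbrev Spc : Type := ℝ × EuclideanSpace ℝ (Fin 3)

/-- Coordinate directions `e_α`, `α = 0,1,2,3` (`e_0` is the time direction). -/
def eVec (α : Fin 4) : Spc :=
  Fin.cases ((1 : ℝ), (0 : EuclideanSpace ℝ (Fin 3)))
    (fun i => ((0 : ℝ), EuclideanSpace.single i (1 : ℝ))) α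

/-- The partial derivative `∂_α u`. -/
def pd (α : Fin 4) (u : Spc → ℝ) (p : Spc) : ℝ := fderiv ℝ u p (eVec α)

/-- `∂_t u`. -/
def dt (u : Spc → ℝ) : Spc → ℝ := pd 0 u

/-- `∂_i u`, `i = 1,2,3`. -/
def dxi (i : Fin 3) (u : Spc → ℝ) : Spc → ℝ := pd i.succ u

/-- The d'Alembertian `□u = -∂_t² u + Δ_x u`. -/
def box (u : Spc → ℝ) (p : Spc) : ℝ :=
  - dt (dt u) p + ∑ i : Fin 3, dxi i (dxi i u) p

/-- Signs of the Minkowski metric `diag(-1,1,1,1)`, so that `∂^α = eta α • ∂_α`. -/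
def eta (α : Fin 4) : ℝ := if α = 0 then -1 else 1

/-- `r = |x|`. -/
def rr (p : Spc) : ℝ := ‖p.2‖

/-- The radial derivative `∂_r u = Σ_i (x_i/r) ∂_i u`. -/
def dr (u : Spc → ℝ) (p : Spc) : ℝ := ∑ i : Fin 3, (p.2 i / rr p) * dxi i u p

/-- `ω̂ = (-1, x/r)` as a `Fin 4`-indexed family. -/
def hatom (p : Spc) (α : Fin 4) : ℝ := Fin.cases (-1 : ℝ) (fun i => p.2 i / rr p) α

/-- The region `Ω_{T₀,R''} = {t ≥ T₀, r - t > R''}`. -/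
def Om (T₀ R'' : ℝ) : Set Spc := {p | T₀ ≤ p.1 ∧ R'' < rr p - p.1}

/-- The open region `{t > T₀, r - t > R''}`. -/
def OmO (T₀ R'' : ℝ) : Set Spc := {p | T₀ < p.1 ∧ R'' < rr p - p.1}

/-- The weight `f_δ(t,x) = r - t - δ⁻¹ t^{-δ}`. -/
def fdel (δ : ℝ) (p : Spc) : ℝ := rr p - p.1 - δ⁻¹ * p.1 ^ (-δ)

/-- `P₁ψ = □ψ + τ² (∂^α f ∂_α f) ψ`. -/
def P1 (τ δ : ℝ) (ψ : Spc → ℝ) (p : Spc) : ℝ :=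
  box ψ p + τ ^ 2 * (∑ α : Fin 4, eta α * pd α (fdel δ) p * pd α (fdel δ) p) * ψ p

/-- `P₂ψ = -2τ ∂^α f ∂_α ψ`. -/
def P2 (τ δ : ℝ) (ψ : Spc → ℝ) (p : Spc) : ℝ :=
  -2 * τ * ∑ α : Fin 4, eta α * pd α (fdel δ) p * pd α ψ p

/-- The weighted inner product `⟨F,G⟩ = ∫_{Ω_{T₀,R''}} F G t² dx dt`. -/
def ip (T₀ R'' : ℝ) (F G : Spc → ℝ) : ℝ := ∫ p in Om T₀ R'', F p * G p * p.1 ^ 2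

/-- The weighted norm `‖F‖ = ⟨F,F⟩^{1/2}`. -/
def nrm (T₀ R'' : ℝ) (F : Spc → ℝ) : ℝ := Real.sqrt (ip T₀ R'' F F)

/-- The quadratic form `B(ψ) = 4(∂^β∂^ν f)(∂_βψ)(∂_νψ) + 4τ²ψ²(∂_α f)(∂_β f)(∂^α∂^β f)`. -/
def Bform (τ δ : ℝ) (ψ : Spc → ℝ) (p : Spc) : ℝ :=
  4 * (∑ β : Fin 4, ∑ ν : Fin 4,
        eta β * eta ν * pd β (pd ν (fdel δ)) p * pd β ψ p * pd ν ψ p)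
    + 4 * τ ^ 2 * ψ p ^ 2 *
      ∑ α : Fin 4, ∑ β : Fin 4,
        pd α (fdel δ) p * pd β (fdel δ) p * (eta α * eta β * pd α (pd β (fdel δ)) p)

section Integration

variable {E F : Type*} [NormedAddCommGroup E] [NormedSpace ℝ E] [NormedAddCommGroup F]
  [NormedSpace ℝ F]

lemma contDiff_of_contDiffAt_of_eq_zero {K : Set E} {g : E → F} {n : WithTop ℕ∞}
    (hK : IsClosed K) (hg : ∀ p ∈ K, ContDiffAt ℝ n g p) (h0 : ∀ q ∉ K, g q = 0) :
    ContDiff ℝ n g := by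
  refine contDiff_iff_contDiffAt.2 fun p => ?_
  by_cases hp : p ∈ K
  · exact hg p hp
  · exact contDiffAt_const.congr_of_eventuallyEq
      (Filter.eventually_of_mem (hK.isOpen_compl.mem_nhds hp) h0)

variable [MeasurableSpace E] [BorelSpace E] {μ : Measure E}

lemma integrable_of_contDiffAt_of_eq_zero [IsFiniteMeasureOnCompacts μ] {K : Set E} {g : E → F}
    (hK : IsCompact K) (hg : ∀ p ∈ K, ContDiffAt ℝ 0 g p) (h0 : ∀ q ∉ K, g q = 0) :
    Integrable g μ :=
  (contDiff_of_contDiffAt_of_eq_zero hK.isClosed hg h0).continuous.integrable_of_hasCompactSupport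
    (HasCompactSupport.intro hK h0)

lemma integrable_fderiv_apply [IsFiniteMeasureOnCompacts μ] {g : E → F} (hg : ContDiff ℝ 1 g)
    (hc : HasCompactSupport g) (v : E) : Integrable (fun x => fderiv ℝ g x v) μ :=
  ((hg.continuous_fderiv one_ne_zero).clm_apply continuous_const).integrable_of_hasCompactSupport
    (hc.fderiv_apply (𝕜 := ℝ) v)

lemma integral_fderiv_apply_eq_zero [FiniteDimensional ℝ E] [μ.IsAddHaarMeasure] {g : E → ℝ}
    (hg : ContDiff ℝ 1 g) (hc : HasCompactSupport g) (v : E) : ∫ x, fderiv ℝ g x v ∂μ = 0 := by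
  have h := integral_mul_fderiv_eq_neg_fderiv_mul_of_integrable (μ := μ) (f := g)
    (g := fun _ => (1 : ℝ)) (v := v) (by simpa using integrable_fderiv_apply hg hc v)
    (by simp) (by simpa using hg.continuous.integrable_of_hasCompactSupport hc)
    (fun x _ => hg.differentiable one_ne_zero x) (fun x _ => differentiableAt_const 1)
  simpa using h.symm

end Integration

section PartialDerivatives

variable {u v : Spc → ℝ} {p : Spc} {α β : Fin 4}

lemma pd_congr (h : u =ᶠ[𝓝 p] v) : pd α u p = pd α v p := by
  rw [pd, pd, h.fderiv_eq]

lemma pd_of_notMem_tsupport (h : p ∉ tsupport u) : pd α u p = 0 := by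
  simp [pd, fderiv_of_notMem_tsupport ℝ h]

lemma contDiffAt_pd {m n : WithTop ℕ∞} (h : ContDiffAt ℝ n u p) (hmn : m + 1 ≤ n) (α : Fin 4) :
    ContDiffAt ℝ m (pd α u) p :=
  (h.fderiv_right hmn).clm_apply contDiffAt_const

lemma differentiableAt_pd {n : WithTop ℕ∞} (h : ContDiffAt ℝ n u p) (hn : 2 ≤ n) (α : Fin 4) :
    DifferentiableAt ℝ (pd α u) p :=
  (contDiffAt_pd h hn α).differentiableAt one_ne_zero

lemma pd_comm (h : ContDiffAt ℝ 2 u p) : pd α (pd β u) p = pd β (pd α u) p := by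
  have hd : DifferentiableAt ℝ (fderiv ℝ u) p :=
    (h.fderiv_right (m := 1) le_rfl).differentiableAt one_ne_zero
  unfold pd
  rw [fderiv_clm_apply hd (differentiableAt_const _),
    fderiv_clm_apply hd (differentiableAt_const _)]
  simp [h.isSymmSndFDerivAt (by simp) (eVec α) (eVec β)]

lemma pd_add (hu : DifferentiableAt ℝ u p) (hv : DifferentiableAt ℝ v p) :
    pd α (fun q => u q + v q) p = pd α u p + pd α v p := by
  simp [pd, fderiv_fun_add hu hv]

lemma pd_mul (hu : DifferentiableAt ℝ u p) (hv : DifferentiableAt ℝ v p) :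
    pd α (fun q => u q * v q) p = pd α u p * v p + u p * pd α v p := by
  simp [pd, fderiv_fun_mul hu hv]; ring

lemma pd_const_mul (c : ℝ) : pd α (fun q => c * u q) p = c * pd α u p := by
  change pd α (c • u) p = _
  simp [pd, fderiv_const_smul_field]

lemma pd_sum {ι : Type*} (s : Finset ι) {g : ι → Spc → ℝ}
    (h : ∀ i ∈ s, DifferentiableAt ℝ (g i) p) :
    pd α (fun q => ∑ i ∈ s, g i q) p = ∑ i ∈ s, pd α (g i) p := by
  simp [pd, fderiv_fun_sum h]

lemma eVec_fst (α : Fin 4) : (eVec α).1 = if α = 0 then 1 else 0 := by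
  cases α using Fin.cases <;> simp [eVec, Fin.succ_ne_zero]

lemma pd_fst_comp {g : ℝ → ℝ} (hg : DifferentiableAt ℝ g p.1) :
    pd α (fun q => g q.1) p = deriv g p.1 * (eVec α).1 := by
  have hd : HasFDerivAt (fun q : Spc => g q.1) (deriv g p.1 • ContinuousLinearMap.fst ℝ ℝ _) p :=
    hg.hasDerivAt.comp_hasFDerivAt p hasFDerivAt_fst
  rw [pd, hd.fderiv]
  simp

lemma pd_zero_snd_comp {h : EuclideanSpace ℝ (Fin 3) → ℝ} (hh : DifferentiableAt ℝ h p.2) :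
    pd 0 (fun q => h q.2) p = 0 := by
  have hd : HasFDerivAt (fun q : Spc => h q.2)
      ((fderiv ℝ h p.2).comp (ContinuousLinearMap.snd ℝ ℝ _)) p :=
    hh.hasFDerivAt.comp p hasFDerivAt_snd
  rw [pd, hd.fderiv]
  simp [eVec]

lemma box_eq_sum (u : Spc → ℝ) (p : Spc) :
    box u p = ∑ γ : Fin 4, eta γ * pd γ (pd γ u) p := by
  simp [box, dt, dxi, eta, Fin.sum_univ_succ (n := 3), Fin.succ_ne_zero]

lemma contDiffAt_box {m n : WithTop ℕ∞} (h : ContDiffAt ℝ n u p) (hmn : m + 2 ≤ n) :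
    ContDiffAt ℝ m (box u) p := by
  have h2 := fun γ => contDiffAt_pd (m := m) (contDiffAt_pd (m := m + 1) h (by rwa [add_assoc]) γ)
    le_rfl γ
  rw [show box u = fun q => ∑ γ : Fin 4, eta γ * pd γ (pd γ u) q from funext (box_eq_sum u)]
  fun_prop

lemma pd_box (h : ContDiffAt ℝ 3 u p) (α : Fin 4) :
    pd α (box u) p = ∑ γ : Fin 4, eta γ * pd γ (pd γ (pd α u)) p := by
  have hev : ∀ᶠ q in 𝓝 p, ContDiffAt ℝ 3 u q := h.eventually (by simp)
  have hsymm : ∀ γ, pd γ (pd α u) =ᶠ[𝓝 p] pd α (pd γ u) := fun γ =>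
    hev.mono fun q hq => pd_comm (hq.of_le (by norm_num))
  have hd : ∀ γ, DifferentiableAt ℝ (pd γ (pd γ u)) p := fun γ =>
    differentiableAt_pd (contDiffAt_pd h le_rfl γ) le_rfl γ
  rw [pd_congr (Filter.Eventually.of_forall (box_eq_sum u))]
  simp (disch := fun_prop) only [pd_sum, pd_const_mul]
  refine Finset.sum_congr rfl fun γ _ => ?_
  rw [pd_comm (contDiffAt_pd h le_rfl γ), pd_congr (hsymm γ)]

lemma pd_fst_sq (α : Fin 4) (p : Spc) :
    pd α (fun q => q.1 ^ 2) p = 2 * p.1 * (eVec α).1 := by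
  rw [pd_fst_comp (g := fun t => t ^ 2) (differentiableAt_pow 2)]
  simp

end PartialDerivatives

section Weight

variable {δ : ℝ}

lemma contDiffAt_fdel {n : WithTop ℕ∞} (ht : 0 < p.1) (hx : p.2 ≠ 0) :
    ContDiffAt ℝ n (fdel δ) p :=
  (((contDiffAt_norm ℝ hx).comp p contDiffAt_snd).sub contDiffAt_fst).sub
    (contDiffAt_const.mul ((Real.contDiffAt_rpow_const_of_ne ht.ne').comp p contDiffAt_fst))

lemma pd_zero_fdel (hδ : δ ≠ 0) (ht : 0 < p.1) (hx : p.2 ≠ 0) :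
    pd 0 (fdel δ) p = -1 + p.1 ^ (-δ - 1) := by
  set g : ℝ → ℝ := fun t => -t - δ⁻¹ * t ^ (-δ)
  have hg : HasDerivAt g (-1 - δ⁻¹ * (-δ * p.1 ^ (-δ - 1))) p.1 :=
    (hasDerivAt_neg p.1).sub ((Real.hasDerivAt_rpow_const (Or.inl ht.ne')).const_mul δ⁻¹)
  have hnorm : DifferentiableAt ℝ norm p.2 :=
    (contDiffAt_norm ℝ hx (n := 1)).differentiableAt one_ne_zero
  have hfdel : fdel δ = fun q => ‖q.2‖ + g q.1 := by
    funext q; simp only [fdel, rr, g]; ring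
  rw [hfdel, pd_add (u := fun q => ‖q.2‖) (v := fun q => g q.1) (hnorm.comp p differentiableAt_snd)
    (hg.differentiableAt.comp p differentiableAt_fst), pd_zero_snd_comp hnorm,
    pd_fst_comp hg.differentiableAt, hg.deriv, eVec_fst, if_pos rfl]
  field_simp
  ring

lemma pd_zero_pd_fdel (hδ : δ ≠ 0) (ht : 0 < p.1) (hx : p.2 ≠ 0) (α : Fin 4) :
    pd 0 (pd α (fdel δ)) p = (-δ - 1) * p.1 ^ (-δ - 2) * (eVec α).1 := by
  have hev : pd 0 (fdel δ) =ᶠ[𝓝 p] fun q => (fun t : ℝ => -1 + t ^ (-δ - 1)) q.1 := by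
    filter_upwards [continuous_fst.isOpen_preimage _ isOpen_Ioi |>.mem_nhds ht,
      continuous_snd.isOpen_preimage _ isOpen_ne |>.mem_nhds hx] with q hq1 hq2
    exact pd_zero_fdel hδ hq1 hq2
  have hg : HasDerivAt (fun t : ℝ => -1 + t ^ (-δ - 1)) ((-δ - 1) * p.1 ^ (-δ - 1 - 1)) p.1 :=
    (Real.hasDerivAt_rpow_const (Or.inl ht.ne')).const_add (-1)
  rw [pd_comm (contDiffAt_fdel ht hx), pd_congr hev, pd_fst_comp hg.differentiableAt, hg.deriv]
  ring_nf

end Weight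

section Commutator

variable {τ δ : ℝ} {ψ : Spc → ℝ}

lemma pd_P2 (hf : ContDiffAt ℝ 2 (fdel δ) p) (hψ : ContDiffAt ℝ 2 ψ p) (β : Fin 4) :
    pd β (P2 τ δ ψ) p = -2 * τ * ∑ α : Fin 4, eta α *
      (pd β (pd α (fdel δ)) p * pd α ψ p + pd α (fdel δ) p * pd β (pd α ψ) p) := by
  have hf1 := differentiableAt_pd hf le_rfl
  have hψ1 := differentiableAt_pd hψ le_rfl
  unfold P2
  simp (disch := fun_prop) only [pd_const_mul, pd_sum, pd_mul]
  simp only [mul_add, mul_assoc]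

lemma pd_pd_P2 (hf : ContDiffAt ℝ 3 (fdel δ) p) (hψ : ContDiffAt ℝ 3 ψ p) (γ β : Fin 4) :
    pd γ (pd β (P2 τ δ ψ)) p = -2 * τ * ∑ α : Fin 4, eta α *
      (pd γ (pd β (pd α (fdel δ))) p * pd α ψ p + pd β (pd α (fdel δ)) p * pd γ (pd α ψ) p
        + (pd γ (pd α (fdel δ)) p * pd β (pd α ψ) p
          + pd α (fdel δ) p * pd γ (pd β (pd α ψ)) p)) := by
  have hev : ∀ᶠ q in 𝓝 p, ContDiffAt ℝ 3 (fdel δ) q ∧ ContDiffAt ℝ 3 ψ q :=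
    (hf.eventually (by simp)).and (hψ.eventually (by simp))
  rw [pd_congr (hev.mono fun q hq => pd_P2 (τ := τ) (hq.1.of_le (by norm_num))
    (hq.2.of_le (by norm_num)) β)]
  have hf1 := differentiableAt_pd hf (by norm_num)
  have hψ1 := differentiableAt_pd hψ (by norm_num)
  have hf2 := fun α => differentiableAt_pd (contDiffAt_pd hf le_rfl α) le_rfl β
  have hψ2 := fun α => differentiableAt_pd (contDiffAt_pd hψ le_rfl α) le_rfl β
  simp (disch := fun_prop) only [pd_const_mul, pd_sum, pd_mul, pd_add]

lemma pd_P1 (hf : ContDiffAt ℝ 2 (fdel δ) p) (hψ : ContDiffAt ℝ 3 ψ p) (α : Fin 4) :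
    pd α (P1 τ δ ψ) p = pd α (box ψ) p
      + τ ^ 2 * (2 * (∑ β : Fin 4, eta β * pd α (pd β (fdel δ)) p * pd β (fdel δ) p) * ψ p
          + (∑ β : Fin 4, eta β * pd β (fdel δ) p * pd β (fdel δ) p) * pd α ψ p) := by
  have hf1 := differentiableAt_pd hf le_rfl
  have hψ0 : DifferentiableAt ℝ ψ p := hψ.differentiableAt (by norm_num)
  have hbox : DifferentiableAt ℝ (box ψ) p :=
    (contDiffAt_box (m := 1) hψ (by norm_num)).differentiableAt one_ne_zero
  unfold P1
  simp (disch := fun_prop) only [pd_const_mul, pd_sum, pd_mul, pd_add]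
  simp only [Fin.sum_univ_four]
  ring

lemma commutator_eq (hf : ContDiffAt ℝ 3 (fdel δ) p) (hψ : ContDiffAt ℝ 3 ψ p) :
    P1 τ δ (P2 τ δ ψ) p - P2 τ δ (P1 τ δ ψ) p
      = -2 * τ * (∑ ν : Fin 4, eta ν * pd ν (box (fdel δ)) p * pd ν ψ p)
        - 4 * τ * (∑ β : Fin 4, ∑ ν : Fin 4,
            eta β * eta ν * pd β (pd ν (fdel δ)) p * pd β (pd ν ψ) p)
        + 4 * τ ^ 3 * ψ p * (∑ α : Fin 4, ∑ β : Fin 4,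
            pd α (fdel δ) p * pd β (fdel δ) p
              * (eta α * eta β * pd α (pd β (fdel δ)) p)) := by
  simp only [P1, box_eq_sum (P2 τ δ ψ), pd_pd_P2 hf hψ, P2,
    pd_P1 (τ := τ) (hf.of_le (by norm_num)) hψ, pd_box hf, pd_box hψ, Fin.sum_univ_four]
  simp only [eta, Fin.isValue, Fin.reduceEq, ↓reduceIte]
  ring

end Commutator

section Divergence

variable {τ δ : ℝ} {ψ : Spc → ℝ}

def current (τ δ : ℝ) (ψ : Spc → ℝ) (β : Fin 4) (q : Spc) : ℝ :=
  -4 * τ * eta β * q.1 ^ 2 * ψ q * ∑ ν : Fin 4, eta ν * pd β (pd ν (fdel δ)) q * pd ν ψ q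

lemma commutator_mul_eq (hδ : δ ≠ 0) (ht : 0 < p.1) (hx : p.2 ≠ 0) (hψ : ContDiffAt ℝ 3 ψ p) :
    (P1 τ δ (P2 τ δ ψ) p - P2 τ δ (P1 τ δ ψ) p) * ψ p * p.1 ^ 2
      = ∑ β : Fin 4, pd β (current τ δ ψ β) p + τ * Bform τ δ ψ p * p.1 ^ 2
        + 2 * τ * (ψ p * (∑ ν : Fin 4, eta ν * pd ν (box (fdel δ)) p * pd ν ψ p) * p.1 ^ 2)
        - 8 * τ * (δ + 1) * (p.1 ^ (-δ - 3) * ψ p * dt ψ p * p.1 ^ 2) := by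
  have hf : ContDiffAt ℝ 3 (fdel δ) p := contDiffAt_fdel ht hx
  have hψ0 : DifferentiableAt ℝ ψ p := hψ.differentiableAt (by norm_num)
  have hψ1 := differentiableAt_pd hψ (by norm_num)
  have hf2 := fun α β => differentiableAt_pd (contDiffAt_pd hf le_rfl α) le_rfl β
  have hpow : p.1 ^ (-δ - 2) = p.1 ^ (-δ - 3) * p.1 := by
    rw [← Real.rpow_add_one ht.ne']; ring_nf
  rw [commutator_eq hf hψ]
  unfold current
  simp (disch := fun_prop) only [pd_const_mul, pd_sum, pd_mul, pd_fst_sq]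
  simp only [Bform, dt, pd_box hf, pd_zero_pd_fdel hδ ht hx, hpow, eVec_fst, Fin.sum_univ_four,
    eta, Fin.isValue, Fin.reduceEq, ↓reduceIte]
  ring

end Divergence

section CompactSupport

instance : (volume : Measure Spc).IsAddHaarMeasure := Measure.prod.instIsAddHaarMeasure _ _

variable {τ δ : ℝ} {ψ : Spc → ℝ}

lemma tsupport_current_subset (β : Fin 4) : tsupport (current τ δ ψ β) ⊆ tsupport ψ :=
  tsupport_mul_subset_left.trans tsupport_mul_subset_right

lemma sum_pd_current_of_notMem_tsupport {q : Spc} (hq : q ∉ tsupport ψ) :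
    ∑ β : Fin 4, pd β (current τ δ ψ β) q = 0 :=
  Finset.sum_eq_zero fun β _ => pd_of_notMem_tsupport fun h => hq (tsupport_current_subset β h)

lemma hasCompactSupport_current (hc : HasCompactSupport ψ) (β : Fin 4) :
    HasCompactSupport (current τ δ ψ β) :=
  hc.mono' ((subset_tsupport _).trans (tsupport_current_subset β))

variable (hψ : ContDiff ℝ 3 ψ) (hsupp : ∀ q ∈ tsupport ψ, 0 < q.1 ∧ q.2 ≠ 0)
include hψ hsupp

lemma commutator_mul_eq_of_tsupport (hδ : δ ≠ 0) (q : Spc) :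
    (P1 τ δ (P2 τ δ ψ) q - P2 τ δ (P1 τ δ ψ) q) * ψ q * q.1 ^ 2
      = ∑ β : Fin 4, pd β (current τ δ ψ β) q + τ * Bform τ δ ψ q * q.1 ^ 2
        + 2 * τ * (ψ q * (∑ ν : Fin 4, eta ν * pd ν (box (fdel δ)) q * pd ν ψ q) * q.1 ^ 2)
        - 8 * τ * (δ + 1) * (q.1 ^ (-δ - 3) * ψ q * dt ψ q * q.1 ^ 2) := by
  by_cases hq : q ∈ tsupport ψ
  · exact commutator_mul_eq hδ (hsupp q hq).1 (hsupp q hq).2 hψ.contDiffAt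
  · simp [image_eq_zero_of_notMem_tsupport hq, Bform, dt, pd_of_notMem_tsupport hq,
      sum_pd_current_of_notMem_tsupport hq]

lemma contDiff_current (β : Fin 4) : ContDiff ℝ 1 (current τ δ ψ β) := by
  refine contDiff_of_contDiffAt_of_eq_zero (isClosed_tsupport ψ) (fun p hp => ?_)
    fun q hq => by simp [current, image_eq_zero_of_notMem_tsupport hq]
  have hf : ContDiffAt ℝ 3 (fdel δ) p := contDiffAt_fdel (hsupp p hp).1 (hsupp p hp).2
  have hf2 := fun ν =>
    contDiffAt_pd (m := 1) (contDiffAt_pd (m := 2) hf (by norm_num) ν) (by norm_num) β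
  have hψ0 : ContDiffAt ℝ 1 ψ p := hψ.contDiffAt.of_le (by norm_num)
  have hψ1 := contDiffAt_pd (m := 1) (hψ.contDiffAt (x := p)) (by norm_num)
  unfold current
  fun_prop

variable (hc : HasCompactSupport ψ)
include hc

lemma integrable_pd_current (β : Fin 4) : Integrable (pd β (current τ δ ψ β)) :=
  integrable_fderiv_apply (contDiff_current hψ hsupp β) (hasCompactSupport_current hc β) _

lemma integral_sum_pd_current : ∫ q, ∑ β : Fin 4, pd β (current τ δ ψ β) q = 0 := by
  rw [integral_finsetSum _ fun β _ => integrable_pd_current hψ hsupp hc β]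
  exact Finset.sum_eq_zero fun β _ =>
    integral_fderiv_apply_eq_zero (contDiff_current hψ hsupp β) (hasCompactSupport_current hc β) _

lemma integrable_Bform : Integrable (fun q => τ * Bform τ δ ψ q * q.1 ^ 2) := by
  refine integrable_of_contDiffAt_of_eq_zero hc (fun p hp => ?_)
    fun q hq => by simp [Bform, image_eq_zero_of_notMem_tsupport hq, pd_of_notMem_tsupport hq]
  have hf : ContDiffAt ℝ 3 (fdel δ) p := contDiffAt_fdel (hsupp p hp).1 (hsupp p hp).2
  have hf1 := contDiffAt_pd (m := 0) hf (by norm_num)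
  have hf2 := fun α β => contDiffAt_pd (m := 0) (contDiffAt_pd hf (m := 1) (by norm_num) β) le_rfl α
  have hψ1 := contDiffAt_pd (m := 0) (hψ.contDiffAt (x := p)) (by norm_num)
  have hψ0 : ContDiffAt ℝ 0 ψ p := hψ.contDiffAt.of_le (by norm_num)
  unfold Bform
  fun_prop

lemma integrable_mul_pd_box :
    Integrable fun q =>
      ψ q * (∑ ν : Fin 4, eta ν * pd ν (box (fdel δ)) q * pd ν ψ q) * q.1 ^ 2 := by
  refine integrable_of_contDiffAt_of_eq_zero hc (fun p hp => ?_)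
    fun q hq => by simp [image_eq_zero_of_notMem_tsupport hq]
  have hf : ContDiffAt ℝ 3 (fdel δ) p := contDiffAt_fdel (hsupp p hp).1 (hsupp p hp).2
  have hbox := contDiffAt_pd (m := 0) (contDiffAt_box (m := 1) hf (by norm_num)) le_rfl
  have hψ1 := contDiffAt_pd (m := 0) (hψ.contDiffAt (x := p)) (by norm_num)
  have hψ0 : ContDiffAt ℝ 0 ψ p := hψ.contDiffAt.of_le (by norm_num)
  fun_prop

lemma integrable_rpow_mul_dt :
    Integrable (fun q => q.1 ^ (-δ - 3) * ψ q * dt ψ q * q.1 ^ 2) := by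
  refine integrable_of_contDiffAt_of_eq_zero hc (fun p hp => ?_)
    fun q hq => by simp [image_eq_zero_of_notMem_tsupport hq]
  have hψ1 := contDiffAt_pd (m := 0) (hψ.contDiffAt (x := p)) (by norm_num)
  have hψ0 : ContDiffAt ℝ 0 ψ p := hψ.contDiffAt.of_le (by norm_num)
  have ht := (hsupp p hp).1
  unfold dt
  fun_prop (disch := positivity)

end CompactSupport

theorem stmt7_general (T₀ R'' τ δ : ℝ) (hT₀ : 0 < T₀) (hTR : 0 < T₀ + R'')
    (hδ0 : 0 < δ)
    (ψ : Spc → ℝ) (hψ : ContDiff ℝ 3 ψ) (hc : HasCompactSupport ψ)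
    (hs : tsupport ψ ⊆ OmO T₀ R'') :
    ip T₀ R'' (fun p => P1 τ δ (P2 τ δ ψ) p - P2 τ δ (P1 τ δ ψ) p) ψ
      = (∫ p in Om T₀ R'', τ * Bform τ δ ψ p * p.1 ^ 2)
        + 2 * τ * ip T₀ R'' ψ
            (fun p => ∑ ν : Fin 4, eta ν * pd ν (box (fdel δ)) p * pd ν ψ p)
        - 8 * τ * (δ + 1) * ip T₀ R'' (fun p => p.1 ^ (-δ - 3) * ψ p) (dt ψ) := by
  have hΩ : tsupport ψ ⊆ Om T₀ R'' := fun q hq => ⟨(hs hq).1.le, (hs hq).2⟩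
  have hsupp : ∀ q ∈ tsupport ψ, 0 < q.1 ∧ q.2 ≠ 0 := fun q hq => by
    obtain ⟨ht, hr⟩ := hs hq
    refine ⟨hT₀.trans ht, norm_pos_iff.1 ?_⟩
    change R'' < ‖q.2‖ - q.1 at hr
    linarith
  have hdiv : ∫ q in Om T₀ R'', ∑ β : Fin 4, pd β (current τ δ ψ β) q = 0 := by
    rw [setIntegral_eq_integral_of_forall_compl_eq_zero fun q hq =>
      sum_pd_current_of_notMem_tsupport fun h => hq (hΩ h)]
    exact integral_sum_pd_current hψ hsupp hc
  have iJ : IntegrableOn (fun q => ∑ β : Fin 4, pd β (current τ δ ψ β) q) (Om T₀ R'') :=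
    (integrable_finsetSum _ fun β _ => integrable_pd_current hψ hsupp hc β).integrableOn
  have iB : IntegrableOn (fun q => τ * Bform τ δ ψ q * q.1 ^ 2) (Om T₀ R'') :=
    (integrable_Bform hψ hsupp hc).integrableOn
  have iC := (integrable_mul_pd_box (δ := δ) hψ hsupp hc).integrableOn (s := Om T₀ R'')
  have iD := (integrable_rpow_mul_dt (δ := δ) hψ hsupp hc).integrableOn (s := Om T₀ R'')
  simp only [ip, commutator_mul_eq_of_tsupport hψ hsupp hδ0.ne']
  rw [integral_sub ((iJ.fun_add iB).fun_add (iC.const_mul _)) (iD.const_mul _),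
    integral_add (iJ.fun_add iB) (iC.const_mul _), integral_add iJ iB, integral_const_mul,
    integral_const_mul, hdiv]
  ring

/-- Lemma 3.5 of the paper: exact expansion of `⟨[P₁,P₂]ψ, ψ⟩`. -/
theorem stmt7 (T₀ R'' τ δ : ℝ) (hT₀ : 0 < T₀) (hTR : 0 < T₀ + R'') (hτ : 0 < τ)
    (hδ0 : 0 < δ) (hδ : δ < 1 / 2)
    (ψ : Spc → ℝ) (hψ : ContDiff ℝ 3 ψ) (hc : HasCompactSupport ψ)
    (hs : tsupport ψ ⊆ OmO T₀ R'') :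
    ip T₀ R'' (fun p => P1 τ δ (P2 τ δ ψ) p - P2 τ δ (P1 τ δ ψ) p) ψ
      = (∫ p in Om T₀ R'', τ * Bform τ δ ψ p * p.1 ^ 2)
        + 2 * τ * ip T₀ R'' ψ
            (fun p => ∑ ν : Fin 4, eta ν * pd ν (box (fdel δ)) p * pd ν ψ p)
        - 8 * τ * (δ + 1) * ip T₀ R'' (fun p => p.1 ^ (-δ - 3) * ψ p) (dt ψ) :=
  stmt7_general T₀ R'' τ δ hT₀ hTR hδ0 ψ hψ hc hs

end UCP
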